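/- Order bound from division: with notation as in the division theorem, if additionally L : ℝ^N → ℝ is a linear form and ord^L(P) := max L(DN(P)), then ord^L(P) = max{ord^L(q_j Q_j) (for q_j ≠ 0), ord^L(R) (if R ≠ 0)} provided the division is performed with respect to the order <_L^h refining L. -/

import Mathlib

open MvPolynomial

/-- `e + ℕ^N` inside the exponent monoid. -/
def upSet {N : ℕ} (e : Fin N →₀ ℕ) : Set (Fin N →₀ ℕ) := {x | ∃ a, x = e + a}

/-- `e` is the privileged exponent (leading exponent) of `P` w.r.t. the order `r`. -/
def IsExp {N : ℕ} (r : (Fin N →₀ ℕ) → (Fin N →₀ ℕ) → Prop)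
    (P : MvPolynomial (Fin N) ℂ) (e : Fin N →₀ ℕ) : Prop :=
  e ∈ P.support ∧ ∀ e' ∈ P.support, e' ≠ e → r e' e

/-- `Exp_≺(J)`: the set of privileged exponents of nonzero elements of `J`. -/
def ExpSet {N : ℕ} (r : (Fin N →₀ ℕ) → (Fin N →₀ ℕ) → Prop)
    (J : Ideal (MvPolynomial (Fin N) ℂ)) : Set (Fin N →₀ ℕ) :=
  {e | ∃ P ∈ J, P ≠ 0 ∧ IsExp r P e}

/-- `{Q_j}` with exponents `{E_j}` is a standard basis of `J` w.r.t. `r`. -/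
def IsStdBasis {N s : ℕ} (r : (Fin N →₀ ℕ) → (Fin N →₀ ℕ) → Prop)
    (J : Ideal (MvPolynomial (Fin N) ℂ))
    (Q : Fin s → MvPolynomial (Fin N) ℂ) (E : Fin s → (Fin N →₀ ℕ)) : Prop :=
  (∀ j, Q j ∈ J ∧ Q j ≠ 0 ∧ IsExp r (Q j) (E j)) ∧
    ExpSet r J = ⋃ j, upSet (E j)

/-- Minimality of a standard basis: the exponents occur in every finite staircase
generating family. -/
def IsMinimalBasis {N s : ℕ} (r : (Fin N →₀ ℕ) → (Fin N →₀ ℕ) → Prop)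
    (J : Ideal (MvPolynomial (Fin N) ℂ)) (E : Fin s → (Fin N →₀ ℕ)) : Prop :=
  ∀ F : Finset (Fin N →₀ ℕ), ExpSet r J = ⋃ e ∈ F, upSet e → ∀ j, E j ∈ F

/-- Reducedness of a standard basis: each `Q_j` is monic and no nonleading monomial of
`Q_j` lies in `Exp_≺(J)`. -/
def IsReducedBasis {N s : ℕ} (r : (Fin N →₀ ℕ) → (Fin N →₀ ℕ) → Prop)
    (J : Ideal (MvPolynomial (Fin N) ℂ))
    (Q : Fin s → MvPolynomial (Fin N) ℂ) (E : Fin s → (Fin N →₀ ℕ)) : Prop :=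
  ∀ j, coeff (E j) (Q j) = 1 ∧ ∀ e ∈ (Q j).support, e ≠ E j → e ∉ ExpSet r J

/-- The staircase region `Δ_j` determined by the exponents `E`. -/
def DeltaF {N s : ℕ} (E : Fin s → (Fin N →₀ ℕ)) (j : Fin s) : Set (Fin N →₀ ℕ) :=
  upSet (E j) \ ⋃ (i : Fin s) (_ : (i : ℕ) < (j : ℕ)), upSet (E i)

/-- The value of the linear form `L` on an exponent. -/
def wt {N : ℕ} (L : Fin N → ℝ) (e : Fin N →₀ ℕ) : ℝ := ∑ i, (e i : ℝ) * L i

/-- `x` is the `L`-order `ord^L(P) = max L(DN(P))` of `P`. -/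
def IsOrd {N : ℕ} (L : Fin N → ℝ) (P : MvPolynomial (Fin N) ℂ) (x : ℝ) : Prop :=
  IsGreatest (wt L '' ↑P.support) x


section AuxOrdDivision

lemma exists_rmax {α : Type*} (r : α → α → Prop) (hstr : IsStrictTotalOrder α r)
    (s : Finset α) (hs : s.Nonempty) : ∃ m ∈ s, ∀ x ∈ s, x ≠ m → r x m := by
  classical
  haveI := hstr
  induction s using Finset.induction_on with
  | empty => simp at hs
  | @insert a t hat ih =>
    rcases t.eq_empty_or_nonempty with rfl | ht
    · exact ⟨a, by simp, by simp⟩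
    · obtain ⟨m, hm, hmax⟩ := ih ht
      rcases trichotomous_of r a m with h | h | h
      · refine ⟨m, Finset.mem_insert_of_mem hm, ?_⟩
        intro x hx hxm
        rcases Finset.mem_insert.mp hx with rfl | hx
        · exact h
        · exact hmax x hx hxm
      · refine ⟨m, Finset.mem_insert_of_mem hm, ?_⟩
        intro x hx hxm
        rcases Finset.mem_insert.mp hx with rfl | hx
        · exact absurd h hxm
        · exact hmax x hx hxm
      · refine ⟨a, Finset.mem_insert_self _ _, ?_⟩
        intro x hx hxa
        rcases Finset.mem_insert.mp hx with rfl | hx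
        · exact absurd rfl hxa
        · rcases eq_or_ne x m with rfl | hxm
          · exact h
          · exact trans_of r (hmax x hx hxm) h

lemma exists_isExp {N : ℕ} {r : (Fin N →₀ ℕ) → (Fin N →₀ ℕ) → Prop}
    (hstr : IsStrictTotalOrder _ r)
    {P : MvPolynomial (Fin N) ℂ} (hP : P ≠ 0) : ∃ e, IsExp r P e := by
  obtain ⟨m, hm, hmax⟩ := exists_rmax r hstr P.support (MvPolynomial.support_nonempty.mpr hP)
  exact ⟨m, hm, hmax⟩

lemma isExp_mul {N : ℕ} {r : (Fin N →₀ ℕ) → (Fin N →₀ ℕ) → Prop}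
    (hstr : IsStrictTotalOrder _ r)
    (hadd : ∀ a b c, r a b → r (a + c) (b + c))
    {f g : MvPolynomial (Fin N) ℂ} {a b : Fin N →₀ ℕ}
    (hf : IsExp r f a) (hg : IsExp r g b) : IsExp r (f * g) (a + b) := by
  haveI := hstr
  have step : ∀ c d : Fin N →₀ ℕ, c ∈ f.support → d ∈ g.support →
      ¬(c = a ∧ d = b) → r (c + d) (a + b) := by
    intro c d hc hd hne
    rcases eq_or_ne c a with rfl | hca
    · have hdb : d ≠ b := fun h => hne ⟨rfl, h⟩
      have := hadd d b c (hg.2 d hd hdb)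
      simpa [add_comm] using this
    · have h1 : r (c + d) (a + d) := hadd c a d (hf.2 c hc hca)
      rcases eq_or_ne d b with rfl | hdb
      · exact h1
      · have h2 : r (a + d) (a + b) := by
          have := hadd d b a (hg.2 d hd hdb)
          simpa [add_comm] using this
        exact trans_of r h1 h2
  have hcoeff : coeff (a + b) (f * g) = coeff a f * coeff b g := by
    rw [coeff_mul]
    refine Finset.sum_eq_single_of_mem (a, b) (Finset.HasAntidiagonal.mem_antidiagonal.mpr rfl) ?_
    intro p hp hpne
    by_contra hne
    have hc : p.1 ∈ f.support := by
      rw [mem_support_iff]; intro h; exact hne (by rw [h, zero_mul])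
    have hd : p.2 ∈ g.support := by
      rw [mem_support_iff]; intro h; exact hne (by rw [h, mul_zero])
    rw [Finset.HasAntidiagonal.mem_antidiagonal] at hp
    have hr : r (p.1 + p.2) (a + b) := by
      refine step p.1 p.2 hc hd ?_
      rintro ⟨h1, h2⟩
      exact hpne (Prod.ext h1 h2)
    rw [hp] at hr
    exact irrefl_of r _ hr
  constructor
  · rw [mem_support_iff, hcoeff]
    exact mul_ne_zero (mem_support_iff.mp hf.1) (mem_support_iff.mp hg.1)
  · intro e he hne
    obtain ⟨c, hc, d, hd, rfl⟩ := Finset.mem_add.mp (MvPolynomial.support_mul f g he)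
    refine step c d hc hd ?_
    rintro ⟨rfl, rfl⟩
    exact hne rfl

end AuxOrdDivision

/-- Order bound from division: if the division of `P` by the `Q_j` is performed with
respect to an order refining the linear form `L`, then
`ord^L(P) = max { ord^L(q_j Q_j) (q_j ≠ 0), ord^L(R) (R ≠ 0) }`. -/
theorem ord_of_division (N s : ℕ) (L : Fin N → ℝ)
    (r : (Fin N →₀ ℕ) → (Fin N →₀ ℕ) → Prop)
    (hstr : IsStrictTotalOrder _ r)
    (hadd : ∀ a b c, r a b → r (a + c) (b + c))
    (hrefine : ∀ a b, wt L a < wt L b → r a b)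
    (Q q : Fin s → MvPolynomial (Fin N) ℂ) (E : Fin s → (Fin N →₀ ℕ))
    (hQ : ∀ j, Q j ≠ 0 ∧ IsExp r (Q j) (E j))
    (P R : MvPolynomial (Fin N) ℂ) (hP : P ≠ 0)
    (hdiv : P = (∑ j, q j * Q j) + R)
    (hq : ∀ j, ∀ a ∈ (q j).support, a + E j ∈ DeltaF E j)
    (hR : ∀ a ∈ R.support, ∀ j, a ∉ upSet (E j))
    (oP : ℝ) (hoP : IsOrd L P oP)
    (oj : Fin s → ℝ) (hoj : ∀ j, q j ≠ 0 → IsOrd L (q j * Q j) (oj j))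
    (oR : ℝ) (hoR : R ≠ 0 → IsOrd L R oR) :
    IsGreatest {x | (∃ j, q j ≠ 0 ∧ x = oj j) ∨ (R ≠ 0 ∧ x = oR)} oP := by
    classical
  haveI := hstr
  have asymm : ∀ x y, r x y → r y x → False := fun x y h1 h2 =>
    irrefl_of r x (trans_of r h1 h2)
  have wt_le : ∀ x y : Fin N →₀ ℕ, (x = y ∨ r x y) → wt L x ≤ wt L y := by
    intro x y h
    rcases h with rfl | h
    · exact le_rfl
    · by_contra hlt
      exact asymm _ _ h (hrefine _ _ (lt_of_not_ge hlt))
  have isOrd_of_isExp : ∀ (T : MvPolynomial (Fin N) ℂ) e, IsExp r T e →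
      IsOrd L T (wt L e) := by
    intro T e hTe
    refine ⟨⟨e, hTe.1, rfl⟩, ?_⟩
    rintro x ⟨e', he', rfl⟩
    rcases eq_or_ne e' e with rfl | h
    · exact le_rfl
    · exact wt_le _ _ (Or.inr (hTe.2 e' (Finset.mem_coe.mp he') h))
  -- choose leading exponents of the q j and of R
  have hqe : ∀ j, ∃ e, q j ≠ 0 → IsExp r (q j) e := by
    intro j
    by_cases h : q j = 0
    · exact ⟨0, fun h' => absurd h h'⟩
    · obtain ⟨e, he⟩ := exists_isExp hstr h
      exact ⟨e, fun _ => he⟩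
  choose a ha using hqe
  obtain ⟨eR, heR⟩ : ∃ e, R ≠ 0 → IsExp r R e := by
    by_cases h : R = 0
    · exact ⟨0, fun h' => absurd h h'⟩
    · obtain ⟨e, he⟩ := exists_isExp hstr h
      exact ⟨e, fun _ => he⟩
  set B : Fin s → (Fin N →₀ ℕ) := fun j => a j + E j with hBdef
  have hBexp : ∀ j, q j ≠ 0 → IsExp r (q j * Q j) (B j) := fun j h =>
    isExp_mul hstr hadd (ha j h) (hQ j).2
  have hBdelta : ∀ j, q j ≠ 0 → B j ∈ DeltaF E j := fun j h =>
    hq j (a j) (ha j h).1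
  -- the leading exponents are pairwise distinct
  have hBne : ∀ i j, q i ≠ 0 → q j ≠ 0 → i ≠ j → B i ≠ B j := by
    have key : ∀ i j, q i ≠ 0 → q j ≠ 0 → (i : ℕ) < (j : ℕ) → B i ≠ B j := by
      intro i j hi hj hij heq
      have h1 : B i ∈ upSet (E i) := (hBdelta i hi).1
      have h2 := (hBdelta j hj).2
      rw [← heq] at h2
      exact h2 (Set.mem_iUnion.mpr ⟨i, Set.mem_iUnion.mpr ⟨hij, h1⟩⟩)
    intro i j hi hj hij
    rcases lt_or_gt_of_ne (fun h : (i : ℕ) = (j : ℕ) => hij (Fin.ext h)) with h | h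
    · exact key i j hi hj h
    · exact fun heq => key j i hj hi h heq.symm
  have hRne : R ≠ 0 → ∀ j, q j ≠ 0 → eR ≠ B j := by
    intro hR0 j hj heq
    have hh := hR eR (heR hR0).1 j
    rw [heq] at hh
    exact hh (hBdelta j hj).1
  -- the finite set of leading exponents
  set S : Finset (Fin N →₀ ℕ) :=
    (Finset.univ.filter fun j => q j ≠ 0).image B ∪ (if R = 0 then ∅ else {eR}) with hSdef
  have hBS : ∀ j, q j ≠ 0 → B j ∈ S := fun j h =>
    Finset.mem_union_left _
      (Finset.mem_image_of_mem B (Finset.mem_filter.mpr ⟨Finset.mem_univ _, h⟩))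
  have heRS : R ≠ 0 → eR ∈ S := by
    intro h
    refine Finset.mem_union_right _ ?_
    rw [if_neg h]
    exact Finset.mem_singleton_self _
  have hSne : S.Nonempty := by
    by_cases h : R = 0
    · have hdiv' := hdiv
      rw [h, add_zero] at hdiv'
      obtain ⟨j, _, hj⟩ := Finset.exists_ne_zero_of_sum_ne_zero
        (show (∑ j, q j * Q j) ≠ 0 by rw [← hdiv']; exact hP)
      have hqj : q j ≠ 0 := fun h0 => hj (by rw [h0, zero_mul])
      exact ⟨B j, hBS j hqj⟩
    · exact ⟨eR, heRS h⟩
  obtain ⟨m, hmS, hmax⟩ := exists_rmax r hstr S hSne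
  -- weight dominance on the supports of all the terms
  have hdomq : ∀ j, ∀ e ∈ (q j * Q j).support, wt L e ≤ wt L m := by
    intro j e he
    have hj : q j ≠ 0 := by
      intro h0; rw [h0, zero_mul] at he; simp at he
    have h1 : e = B j ∨ r e (B j) := by
      rcases eq_or_ne e (B j) with h | h
      · exact Or.inl h
      · exact Or.inr ((hBexp j hj).2 e he h)
    have h2 : B j = m ∨ r (B j) m := by
      rcases eq_or_ne (B j) m with h | h
      · exact Or.inl h
      · exact Or.inr (hmax _ (hBS j hj) h)
    exact le_trans (wt_le _ _ h1) (wt_le _ _ h2)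
  have hdomR : ∀ e ∈ R.support, wt L e ≤ wt L m := by
    intro e he
    have hR0 : R ≠ 0 := by
      intro h; rw [h] at he; simp at he
    have h1 : e = eR ∨ r e eR := by
      rcases eq_or_ne e eR with h | h
      · exact Or.inl h
      · exact Or.inr ((heR hR0).2 e he h)
    have h2 : eR = m ∨ r eR m := by
      rcases eq_or_ne eR m with h | h
      · exact Or.inl h
      · exact Or.inr (hmax _ (heRS hR0) h)
    exact le_trans (wt_le _ _ h1) (wt_le _ _ h2)
  have hsuppP : ∀ e ∈ P.support, wt L e ≤ wt L m := by
    intro e he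
    rw [mem_support_iff, hdiv, coeff_add, coeff_sum] at he
    by_cases h : coeff e R = 0
    · rw [h, add_zero] at he
      obtain ⟨j, _, hj⟩ := Finset.exists_ne_zero_of_sum_ne_zero he
      exact hdomq j e (mem_support_iff.mpr hj)
    · exact hdomR e (mem_support_iff.mpr h)
  -- vanishing of coefficients at m for the "other" terms
  have hnotq : ∀ j, B j ≠ m → coeff m (q j * Q j) = 0 := by
    intro j hBj
    by_cases hqj : q j = 0
    · rw [hqj, zero_mul, coeff_zero]
    · by_contra hc
      have hmem := mem_support_iff.mpr hc
      rcases eq_or_ne m (B j) with h | hne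
      · exact hBj h.symm
      · have h1 : r m (B j) := (hBexp j hqj).2 m hmem hne
        have h2 : r (B j) m := hmax _ (hBS j hqj) hBj
        exact asymm _ _ h1 h2
  have hnotR : R ≠ 0 → eR ≠ m → coeff m R = 0 := by
    intro hR0 hne
    by_contra hc
    have hmem := mem_support_iff.mpr hc
    rcases eq_or_ne m eR with h | hmn
    · exact hne h.symm
    · have h1 : r m eR := (heR hR0).2 m hmem hmn
      have h2 : r eR m := hmax _ (heRS hR0) hne
      exact asymm _ _ h1 h2
  -- conclude, by cases on which leading exponent m is
  rcases Finset.mem_union.mp hmS with hcase | hcase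
  · -- m is the leading exponent of some q j0 * Q j0
    obtain ⟨j0, hj0mem, hBj0⟩ := Finset.mem_image.mp hcase
    have hj0 : q j0 ≠ 0 := (Finset.mem_filter.mp hj0mem).2
    have hcR : coeff m R = 0 := by
      by_cases hR0 : R = 0
      · rw [hR0, coeff_zero]
      · exact hnotR hR0 (fun h => hRne hR0 j0 hj0 (h.trans hBj0.symm))
    have hcoeffP : coeff m P = coeff m (q j0 * Q j0) := by
      rw [hdiv, coeff_add, coeff_sum, hcR, add_zero]
      refine Finset.sum_eq_single j0 ?_ ?_
      · intro j _ hj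
        by_cases hqj : q j = 0
        · rw [hqj, zero_mul, coeff_zero]
        · exact hnotq j (fun h => hBne j j0 hqj hj0 hj (h.trans hBj0.symm))
      · intro h
        exact absurd (Finset.mem_univ j0) h
    have hmsupp : m ∈ P.support := by
      rw [mem_support_iff, hcoeffP, ← hBj0]
      exact mem_support_iff.mp (hBexp j0 hj0).1
    have hordP : IsOrd L P (wt L m) := by
      refine ⟨⟨m, hmsupp, rfl⟩, ?_⟩
      rintro x ⟨e, he, rfl⟩
      exact hsuppP e (Finset.mem_coe.mp he)
    have hoPeq : oP = wt L m := hoP.unique hordP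
    have hojeq : oj j0 = wt L m := by
      rw [← hBj0]
      exact (hoj j0 hj0).unique (isOrd_of_isExp _ _ (hBexp j0 hj0))
    constructor
    · exact Or.inl ⟨j0, hj0, by rw [hoPeq, hojeq]⟩
    · rintro x (⟨j, hj, rfl⟩ | ⟨hR0, rfl⟩)
      · obtain ⟨e, he, hwe⟩ := (hoj j hj).1
        rw [hoPeq, ← hwe]
        exact hdomq j e (Finset.mem_coe.mp he)
      · obtain ⟨e, he, hwe⟩ := (hoR hR0).1
        rw [hoPeq, ← hwe]
        exact hdomR e (Finset.mem_coe.mp he)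
  · -- m is the leading exponent of R
    have hR0 : R ≠ 0 := by
      intro h
      rw [if_pos h] at hcase
      exact absurd hcase (Finset.notMem_empty m)
    have hmeR : m = eR := by
      rw [if_neg hR0] at hcase
      exact Finset.mem_singleton.mp hcase
    have hcoeffP : coeff m P = coeff m R := by
      rw [hdiv, coeff_add, coeff_sum]
      rw [Finset.sum_eq_zero, zero_add]
      intro j _
      by_cases hqj : q j = 0
      · rw [hqj, zero_mul, coeff_zero]
      · exact hnotq j (fun h => hRne hR0 j hqj (by rw [h, hmeR]))
    have hmsupp : m ∈ P.support := by
      rw [mem_support_iff, hcoeffP, hmeR]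
      exact mem_support_iff.mp (heR hR0).1
    have hordP : IsOrd L P (wt L m) := by
      refine ⟨⟨m, hmsupp, rfl⟩, ?_⟩
      rintro x ⟨e, he, rfl⟩
      exact hsuppP e (Finset.mem_coe.mp he)
    have hoPeq : oP = wt L m := hoP.unique hordP
    have hoReq : oR = wt L m := by
      rw [hmeR]
      exact (hoR hR0).unique (isOrd_of_isExp _ _ (heR hR0))
    constructor
    · exact Or.inr ⟨hR0, by rw [hoPeq, hoReq]⟩
    · rintro x (⟨j, hj, rfl⟩ | ⟨hR0', rfl⟩)
      · obtain ⟨e, he, hwe⟩ := (hoj j hj).1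
        rw [hoPeq, ← hwe]
        exact hdomq j e (Finset.mem_coe.mp he)
      · obtain ⟨e, he, hwe⟩ := (hoR hR0').1
        rw [hoPeq, ← hwe]
        exact hdomR e (Finset.mem_coe.mp he)
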